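/- arXiv:2001.03533 — 4 statements merged into one kernel-verified Lean document; each statement's English description precedes it below -/
import Mathlib

section
/- Let M, N be unit intervals of abelian lattice-ordered groups with unit, with MV-operations as above, and let s : M → N satisfy s(1) = 1. Then s is a state (s(a ⊕ b) = s(a) + s(b) whenever a ⊙ b = 0, addition in the ambient group) if and only if s satisfies: (A1) s(a ⊕ b) = s(a) ⊕ s(b ∧ ¬a), (A2) s(¬a) = ¬s(a), and (A3) s(1) = 1, for all a, b ∈ M. -/
/-!
A state is additive on orthogonal pairs, and `a ⊕ b` is the orthogonal sum of `a` and
`b ∧ ¬a`; this gives (A1), and (A2) is additivity on the orthogonal pair `a, ¬a`.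
Conversely (A1) with `b ≤ ¬a` is additivity truncated at `1`, so it remains to see that the
truncation is inactive: (A1) makes `s` monotone and (A2) turns `b ≤ ¬a` into
`s b ≤ 1 - s a`. Monotonicity uses `0 ≤ s ≤ 1`, which (A1)–(A3) force via `s 0 = 0`.
-/

section

variable {G H : Type*} [Lattice G] [AddCommGroup G] [AddLeftMono G]
  [Lattice H] [AddCommGroup H]

theorem add_inf_sub_eq_add_inf (a b u : G) : a + b ⊓ (u - a) = (a + b) ⊓ u := by
  rw [add_inf, add_sub_cancel]

/-- In `Γ(G, u)`, `(a + b - u) ⊔ 0 = 0` is `a ⊙ b = 0` and `(a + b) ⊓ u` is `a ⊕ b`. -/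
def IsMVState (u : G) (v : H) (s : G → H) : Prop :=
  ∀ a b : G, 0 ≤ a → a ≤ u → 0 ≤ b → b ≤ u → (a + b - u) ⊔ 0 = 0 →
    s ((a + b) ⊓ u) = s a + s b ∧ s a + s b ≤ v

variable {u : G} {v : H} {s : G → H}

namespace IsMVState

variable (hs : IsMVState u v s)
include hs

theorem map_add_of_add_le {a b : G} (ha : 0 ≤ a) (hb : 0 ≤ b) (hab : a + b ≤ u) :
    s (a + b) = s a + s b ∧ s a + s b ≤ v := by
  have hau : a ≤ u := (le_add_of_nonneg_right hb).trans hab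
  have hbu : b ≤ u := (le_add_of_nonneg_left ha).trans hab
  simpa only [inf_eq_left.mpr hab] using
    hs a b ha hau hb hbu (sup_eq_right.mpr (sub_nonpos.mpr hab))

theorem map_add_inf (a b : G) (ha : 0 ≤ a) (hau : a ≤ u) (hb : 0 ≤ b) :
    s ((a + b) ⊓ u) = (s a + s (b ⊓ (u - a))) ⊓ v := by
  have hc : a + b ⊓ (u - a) ≤ u := add_inf_sub_eq_add_inf a b u ▸ inf_le_right
  obtain ⟨hadd, hle⟩ :=
    hs.map_add_of_add_le ha (le_inf hb (sub_nonneg.mpr hau)) hc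
  rw [← add_inf_sub_eq_add_inf, hadd, inf_eq_left.mpr hle]

theorem map_sub (hunit : s u = v) (a : G) (ha : 0 ≤ a) (hau : a ≤ u) :
    s (u - a) = v - s a := by
  have hadd := (hs.map_add_of_add_le ha (sub_nonneg.mpr hau) (add_sub_cancel a u).le).1
  rw [add_sub_cancel, hunit] at hadd
  exact eq_sub_of_add_eq' hadd.symm

end IsMVState

section Equational

variable
  (hA1 : ∀ a b : G, 0 ≤ a → a ≤ u → 0 ≤ b → b ≤ u →
    s ((a + b) ⊓ u) = (s a + s (b ⊓ (u - a))) ⊓ v)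
  (hA2 : ∀ a : G, 0 ≤ a → a ≤ u → s (u - a) = v - s a)
  (hA3 : s u = v)

include hA1 hA2 hA3 in
theorem map_le_of_equational {a : G} (ha : 0 ≤ a) (hau : a ≤ u) : s a ≤ v := by
  have hu : 0 ≤ u := ha.trans hau
  have hzero : s 0 = 0 := by simpa [hA3] using hA2 u hu le_rfl
  have h := hA1 a 0 ha hau le_rfl hu
  rw [add_zero, inf_eq_left.mpr hau, inf_eq_left.mpr (sub_nonneg.mpr hau), hzero,
    add_zero] at h
  exact h ▸ inf_le_right

include hA1 hA2 hA3 in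
theorem map_nonneg_of_equational [AddLeftMono H] {a : G} (ha : 0 ≤ a) (hau : a ≤ u) : 0 ≤ s a := by
  have h := map_le_of_equational hA1 hA2 hA3 (sub_nonneg.mpr hau) (sub_le_self u ha)
  rwa [hA2 a ha hau, sub_le_self_iff] at h

include hA1 hA2 hA3 in
theorem map_mono_of_equational [AddLeftMono H] {x y : G} (hx : 0 ≤ x) (hxy : x ≤ y) (hyu : y ≤ u) :
    s x ≤ s y := by
  have hd : 0 ≤ y - x := sub_nonneg.mpr hxy
  have h := hA1 x (y - x) hx (hxy.trans hyu) hd ((sub_le_self y hx).trans hyu)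
  rw [add_sub_cancel, inf_eq_left.mpr (sub_le_sub_right hyu x), inf_eq_left.mpr hyu] at h
  rw [h]
  exact le_inf
    (le_add_of_nonneg_right (map_nonneg_of_equational hA1 hA2 hA3 hd
      ((sub_le_self y hx).trans hyu)))
    (map_le_of_equational hA1 hA2 hA3 hx (hxy.trans hyu))

include hA1 hA2 hA3 in
theorem IsMVState.of_equational [AddLeftMono H] : IsMVState u v s := by
  intro a b ha hau hb hbu horth
  have hab : a + b ≤ u := sub_nonpos.mp (sup_eq_right.mp horth)
  have hb' : b ≤ u - a := le_sub_iff_add_le'.mpr hab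
  have hle : s a + s b ≤ v := by
    have := map_mono_of_equational hA1 hA2 hA3 hb hb' (sub_le_self u ha)
    rwa [hA2 a ha hau, le_sub_iff_add_le'] at this
  have h := hA1 a b ha hau hb hbu
  rw [inf_eq_left.mpr hb', inf_eq_left.mpr hle] at h
  exact ⟨h, hle⟩

end Equational

end

theorem state_iff_equational_general
    {G H : Type*} [Lattice G] [AddCommGroup G]
    [CovariantClass G G (· + ·) (· ≤ ·)]
    [Lattice H] [AddCommGroup H]
    [CovariantClass H H (· + ·) (· ≤ ·)]
    (uG : G) (uH : H)
    (s : G → H)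
    (hunit : s uG = uH) :
    (∀ a b : G, 0 ≤ a → a ≤ uG → 0 ≤ b → b ≤ uG →
        (a + b - uG) ⊔ 0 = 0 →
        s ((a + b) ⊓ uG) = s a + s b ∧ s a + s b ≤ uH)
    ↔
    ((∀ a b : G, 0 ≤ a → a ≤ uG → 0 ≤ b → b ≤ uG →
        s ((a + b) ⊓ uG) = (s a + s (b ⊓ (uG - a))) ⊓ uH) ∧
     (∀ a : G, 0 ≤ a → a ≤ uG → s (uG - a) = uH - s a) ∧
     s uG = uH) := by
  constructor
  · intro hs
    exact ⟨fun a b ha hau hb _ => IsMVState.map_add_inf hs a b ha hau hb,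
      IsMVState.map_sub hs hunit, hunit⟩
  · rintro ⟨hA1, hA2, hA3⟩
    exact IsMVState.of_equational hA1 hA2 hA3

/-- Proposition on equational characterisation of states:
For s mapping the unit interval of G into the unit interval of H with s(1) = 1,
s is a state (s(a ⊕ b) = s(a) + s(b) whenever a ⊙ b = 0, + in the ambient group,
which includes s(a) + s(b) ≤ 1) iff s satisfies (A1) s(a ⊕ b) = s(a) ⊕ s(b ∧ ¬a),
(A2) s(¬a) = ¬s(a), and (A3) s(1) = 1. -/
theorem state_iff_equational
    {G H : Type*} [Lattice G] [AddCommGroup G]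
    [CovariantClass G G (· + ·) (· ≤ ·)]
    [Lattice H] [AddCommGroup H]
    [CovariantClass H H (· + ·) (· ≤ ·)]
    (uG : G) (huG : 0 ≤ uG) (uH : H) (huH : 0 ≤ uH)
    (s : G → H)
    (hrange : ∀ a : G, 0 ≤ a → a ≤ uG → 0 ≤ s a ∧ s a ≤ uH)
    (hunit : s uG = uH) :
    (∀ a b : G, 0 ≤ a → a ≤ uG → 0 ≤ b → b ≤ uG →
        (a + b - uG) ⊔ 0 = 0 →
        s ((a + b) ⊓ uG) = s a + s b ∧ s a + s b ≤ uH)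
    ↔
    ((∀ a b : G, 0 ≤ a → a ≤ uG → 0 ≤ b → b ≤ uG →
        s ((a + b) ⊓ uG) = (s a + s (b ⊓ (uG - a))) ⊓ uH) ∧
     (∀ a : G, 0 ≤ a → a ≤ uG → s (uG - a) = uH - s a) ∧
     s uG = uH) :=
  state_iff_equational_general uG uH s hunit
end

section
/- Let M, N be unit intervals of abelian lattice-ordered groups with unit, and let s : M → N satisfy the equational axioms s(a ⊕ b) = s(a) ⊕ s(b ∧ ¬a), s(¬a) = ¬s(a), s(1) = 1. Then for all a, b ∈ M with a ⊙ b = 0 one has s(a) ⊙ s(b) = 0. -/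
/-! Axiom (A1) with `b := y - x` gives `s y = (s x + s t) ⊓ 1 ≥ s x` for some `t` in the unit
interval, so `s` is monotone there. If `a ⊙ b = 0` then `b ≤ ¬a`, hence `s b ≤ s (¬a) = ¬s a`
by (A2), which is `s a ⊙ s b = 0`. -/

theorem monotoneOn_Icc_of_map_add_inf
    {G H : Type*} [Lattice G] [AddCommGroup G]
    [CovariantClass G G (· + ·) (· ≤ ·)]
    [Lattice H] [AddCommGroup H]
    [CovariantClass H H (· + ·) (· ≤ ·)]
    (uG : G) (uH : H) (s : G → H)
    (hrange : ∀ a : G, 0 ≤ a → a ≤ uG → 0 ≤ s a ∧ s a ≤ uH)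
    (hA1 : ∀ a b : G, 0 ≤ a → a ≤ uG → 0 ≤ b → b ≤ uG →
        s ((a + b) ⊓ uG) = (s a + s (b ⊓ (uG - a))) ⊓ uH) :
    MonotoneOn s (Set.Icc 0 uG) := by
  rintro x ⟨hx0, hx1⟩ y ⟨-, hy1⟩ hxy
  have hd0 : 0 ≤ y - x := sub_nonneg.2 hxy
  have hd1 : y - x ≤ uG := (sub_le_self _ hx0).trans hy1
  have ht : 0 ≤ s ((y - x) ⊓ (uG - x)) :=
    (hrange _ (le_inf hd0 (sub_nonneg.2 hx1)) (inf_le_left.trans hd1)).1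
  calc s x ≤ (s x + s ((y - x) ⊓ (uG - x))) ⊓ uH :=
        le_inf (le_add_of_nonneg_right ht) (hrange x hx0 hx1).2
    _ = s y := by rw [← hA1 x (y - x) hx0 hx1 hd0 hd1, add_sub_cancel, inf_eq_left.2 hy1]

theorem equational_state_preserves_odot_zero_general
    {G H : Type*} [Lattice G] [AddCommGroup G]
    [CovariantClass G G (· + ·) (· ≤ ·)]
    [Lattice H] [AddCommGroup H]
    [CovariantClass H H (· + ·) (· ≤ ·)]
    (uG : G) (uH : H)
    (s : G → H)
    (hrange : ∀ a : G, 0 ≤ a → a ≤ uG → 0 ≤ s a ∧ s a ≤ uH)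
    (hA1 : ∀ a b : G, 0 ≤ a → a ≤ uG → 0 ≤ b → b ≤ uG →
        s ((a + b) ⊓ uG) = (s a + s (b ⊓ (uG - a))) ⊓ uH)
    (hA2 : ∀ a : G, 0 ≤ a → a ≤ uG → s (uG - a) = uH - s a) :
    ∀ a b : G, 0 ≤ a → a ≤ uG → 0 ≤ b → b ≤ uG →
      (a + b - uG) ⊔ 0 = 0 → (s a + s b - uH) ⊔ 0 = 0 := by
  intro a b ha0 ha1 hb0 hb1 hab
  have hb_le : b ≤ uG - a := le_sub_iff_add_le'.2 (sub_nonpos.1 (sup_eq_right.1 hab))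
  have hsb_le : s b ≤ uH - s a := by
    rw [← hA2 a ha0 ha1]
    exact monotoneOn_Icc_of_map_add_inf uG uH s hrange hA1 ⟨hb0, hb1⟩
      ⟨sub_nonneg.2 ha1, sub_le_self _ ha0⟩ hb_le
  exact sup_eq_right.2 (sub_nonpos.2 (le_sub_iff_add_le'.1 hsb_le))

/-- If s between unit intervals of abelian lattice-ordered groups
with unit satisfies the equational axioms (A1)-(A3), then a ⊙ b = 0 implies
s(a) ⊙ s(b) = 0. -/
theorem equational_state_preserves_odot_zero
    {G H : Type*} [Lattice G] [AddCommGroup G]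
    [CovariantClass G G (· + ·) (· ≤ ·)]
    [Lattice H] [AddCommGroup H]
    [CovariantClass H H (· + ·) (· ≤ ·)]
    (uG : G) (huG : 0 ≤ uG) (uH : H) (huH : 0 ≤ uH)
    (s : G → H)
    (hrange : ∀ a : G, 0 ≤ a → a ≤ uG → 0 ≤ s a ∧ s a ≤ uH)
    (hA1 : ∀ a b : G, 0 ≤ a → a ≤ uG → 0 ≤ b → b ≤ uG →
        s ((a + b) ⊓ uG) = (s a + s (b ⊓ (uG - a))) ⊓ uH)
    (hA2 : ∀ a : G, 0 ≤ a → a ≤ uG → s (uG - a) = uH - s a)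
    (hA3 : s uG = uH) :
    ∀ a b : G, 0 ≤ a → a ≤ uG → 0 ≤ b → b ≤ uG →
      (a + b - uG) ⊔ 0 = 0 → (s a + s b - uH) ⊔ 0 = 0 :=
  equational_state_preserves_odot_zero_general uG uH s hrange hA1 hA2
end

section
/- Let k_1, …, k_n be positive integers. The simplex Δ_k = conv{e_1/k_1, …, e_n/k_n} ⊆ ℝ^n is regular: whenever x is a rational point in the relative interior of the face spanned by vertices e_{i_1}/k_{i_1}, …, e_{i_l}/k_{i_l}, then den(x) ≥ k_{i_1} + … + k_{i_l}. -/
/-- The denominator of a rational point: the lcm of the denominators of its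
coordinates (in lowest terms). -/
def ratDen {n : ℕ} (x : Fin n → ℚ) : ℕ :=
  Finset.univ.lcm fun i => (x i).den

/-- The simplex Δ_k = conv{e_1/k_1, …, e_n/k_n} is regular:
if x is a rational point in the relative interior of the face spanned by the
vertices e_i/k_i, i ∈ t (a nonempty set of indices), then
den(x) ≥ ∑_{i ∈ t} k_i. -/
theorem simplex_regular
    {n : ℕ} (k : Fin n → ℕ) (hk : ∀ i, 0 < k i)
    (t : Finset (Fin n)) (ht : t.Nonempty)
    (lam : Fin n → ℝ) (hlam : ∀ i ∈ t, 0 < lam i)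
    (hsum : ∑ i ∈ t, lam i = 1)
    (q : Fin n → ℚ)
    (hx : (fun i => (q i : ℝ)) =
      ∑ j ∈ t, lam j • (Pi.single j ((k j : ℝ)⁻¹) : Fin n → ℝ)) :
    ∑ j ∈ t, k j ≤ ratDen q := by
  -- coordinate values
  have hcoord : ∀ i ∈ t, (q i : ℝ) = lam i * (k i : ℝ)⁻¹ := by
    intro i hi
    have := congrFun hx i
    simp only [Finset.sum_apply, Pi.smul_apply, Pi.single_apply, smul_eq_mul] at this
    rw [this, Finset.sum_eq_single i]
    · simp
    · intro j hj hne
      simp [Ne.symm hne]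
    · intro h; exact absurd hi h
  have hqpos : ∀ i ∈ t, 0 < q i := by
    intro i hi
    have h1 : (0:ℝ) < (q i : ℝ) := by
      rw [hcoord i hi]
      exact mul_pos (hlam i hi) (inv_pos.mpr (by exact_mod_cast hk i))
    exact_mod_cast h1
  -- sum equation in ℚ
  have hsumQ : ∑ i ∈ t, (k i : ℚ) * q i = 1 := by
    have hR : ∑ i ∈ t, ((k i : ℝ) * (q i : ℝ)) = 1 := by
      rw [← hsum]
      apply Finset.sum_congr rfl
      intro i hi
      rw [hcoord i hi, ← mul_assoc, mul_comm (k i : ℝ) (lam i), mul_assoc,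
        mul_inv_cancel₀ (by exact_mod_cast (hk i).ne' : (k i : ℝ) ≠ 0), mul_one]
    exact_mod_cast hR
  set D := ratDen q with hD
  have hdvd : ∀ i, (q i).den ∣ D := fun i => Finset.dvd_lcm (Finset.mem_univ i)
  have hDpos : 0 < D := by
    rcases Nat.eq_zero_or_pos D with h0 | h
    · exfalso
      obtain ⟨i, hi⟩ := ht
      have h0' : Finset.univ.lcm (fun i => (q i).den) = 0 := by
        rw [← ratDen, ← hD]; exact h0
      have hlz := Finset.lcm_eq_zero_iff.mp h0'
      obtain ⟨j, -, hj⟩ := hlz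
      exact (q j).den_nz hj
    · exact h
  -- each q i ≥ 1/D
  have hqge : ∀ i ∈ t, (1:ℚ)/D ≤ q i := by
    intro i hi
    have hdenpos : 0 < ((q i).den : ℚ) := by exact_mod_cast (q i).pos
    have hdenle : ((q i).den : ℚ) ≤ (D : ℚ) := by
      exact_mod_cast Nat.le_of_dvd hDpos (hdvd i)
    have h1 : (1:ℚ)/D ≤ 1/((q i).den : ℚ) :=
      one_div_le_one_div_of_le hdenpos hdenle
    have hnum : (1:ℚ) ≤ ((q i).num : ℚ) := by
      exact_mod_cast Rat.num_pos.mpr (hqpos i hi)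
    calc (1:ℚ)/D ≤ 1/((q i).den : ℚ) := h1
      _ ≤ ((q i).num : ℚ)/((q i).den : ℚ) := by gcongr
      _ = q i := Rat.num_div_den _
  -- conclude
  have key : ((∑ j ∈ t, k j : ℕ) : ℚ) / D ≤ 1 := by
    rw [← hsumQ]
    push_cast
    rw [Finset.sum_div]
    apply Finset.sum_le_sum
    intro i hi
    calc (k i : ℚ) / D = (k i : ℚ) * (1/D) := by ring
      _ ≤ (k i : ℚ) * q i :=
        mul_le_mul_of_nonneg_left (hqge i hi) (by positivity)
  have hDQ : (0:ℚ) < D := by exact_mod_cast hDpos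
  have := (div_le_one hDQ).mp key
  exact_mod_cast this
end

section
/- Let A = M_{k_1} × ⋯ × M_{k_n} be a finite product where M_k = {0, 1/k, …, 1} ⊆ [0,1], and let a_1, …, a_n be the atoms of A (the standard basis elements with value 1/k_i in the i-th component and 0 elsewhere). Let N be the unit interval of an abelian lattice-ordered group H with unit. A function s : {a_1, …, a_n} → N extends to a state A → N if and only if k_1·s(a_1) + ⋯ + k_n·s(a_n) = 1 in H, and in that case the extension is unique. -/
/-!
A state is additive on the unit interval of `(ℤ^n, k)`, and every element `a` of that interval
is the sum of the vectors `Pi.single i (a i)`, each of which is `a i` copies of the atom `e i`.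
Hence a state `s` satisfies `s a = ∑ i, a i • s (e i)`: it is determined by its values on the
atoms, and evaluating at `a = k` gives `∑ i, k i • s (e i) = 1`. Conversely, when this holds and
the values `f i` are nonnegative, `a ↦ ∑ i, a i • f i` is additive, normalised and maps the unit
interval into `[0, 1]`, so it is a state extending `f`.
-/

/-- A state of the unit interval of the simplicial group (ℤ^n, k) with values in
the unit interval of an abelian lattice-ordered group H with unit u:
it maps the unit interval into the unit interval, is normalised, and is
additive whenever a, b, a+b all lie in the unit interval. -/
def IsSimplicialState {n : ℕ} {H : Type*} [Lattice H] [AddCommGroup H]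
    (kv : Fin n → ℤ) (u : H) (s : (Fin n → ℤ) → H) : Prop :=
  (∀ a : Fin n → ℤ, 0 ≤ a → a ≤ kv → 0 ≤ s a ∧ s a ≤ u) ∧
  s kv = u ∧
  (∀ a b : Fin n → ℤ, 0 ≤ a → a ≤ kv → 0 ≤ b → b ≤ kv → a + b ≤ kv →
    s (a + b) = s a + s b)

section

variable {n : ℕ} {H : Type*} [AddCommGroup H]

theorem sum_single_zsmul (f : Fin n → H) (j : Fin n) :
    ∑ i, (Pi.single j 1 : Fin n → ℤ) i • f i = f j := by
  simp [Pi.single_apply, ite_smul]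

variable [Lattice H] {kv : Fin n → ℤ} {u : H}

namespace IsSimplicialState

variable {s : (Fin n → ℤ) → H}

theorem map_zero (hs : IsSimplicialState kv u s) (hkv : 0 ≤ kv) : s 0 = 0 := by
  have h := hs.2.2 0 0 le_rfl hkv le_rfl hkv (by simpa using hkv)
  rw [add_zero] at h
  exact left_eq_add.mp h

theorem map_sum (hs : IsSimplicialState kv u s) {ι : Type*} (T : Finset ι)
    {b : ι → Fin n → ℤ} (hb : ∀ j ∈ T, 0 ≤ b j) (hT : ∑ j ∈ T, b j ≤ kv) :
    s (∑ j ∈ T, b j) = ∑ j ∈ T, s (b j) := by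
  classical
  induction T using Finset.induction_on with
  | empty => simpa using hs.map_zero (by simpa using hT)
  | insert j T hj ih =>
    rw [Finset.sum_insert hj] at hT ⊢
    rw [Finset.forall_mem_insert] at hb
    have hT0 : 0 ≤ ∑ j ∈ T, b j := Finset.sum_nonneg hb.2
    have hbj : b j ≤ kv := (le_add_of_nonneg_right hT0).trans hT
    have hTle : ∑ j ∈ T, b j ≤ kv := (le_add_of_nonneg_left hb.1).trans hT
    rw [hs.2.2 _ _ hb.1 hbj hT0 hTle hT, ih hb.2 hTle, Finset.sum_insert hj]

theorem map_nsmul_single (hs : IsSimplicialState kv u s) (i : Fin n) (c : ℕ)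
    (hc : c • Pi.single i 1 ≤ kv) :
    s (c • Pi.single i 1) = c • s (Pi.single i 1) := by
  have h := hs.map_sum (Finset.range c) (b := fun _ => Pi.single i 1)
    (fun _ _ => Pi.single_nonneg.mpr zero_le_one) (by simpa using hc)
  simpa using h

theorem eq_sum_zsmul_atoms (hs : IsSimplicialState kv u s) {a : Fin n → ℤ}
    (ha : 0 ≤ a) (hak : a ≤ kv) : s a = ∑ i, a i • s (Pi.single i 1) := by
  have hsingle : ∀ i, Pi.single i (a i) = (a i).toNat • (Pi.single i 1 : Fin n → ℤ) := by
    intro i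
    rw [← Pi.single_smul, nsmul_one, Int.toNat_of_nonneg (ha i)]
  have hsingle_le : ∀ i, Pi.single i (a i) ≤ a := fun i j => by
    rcases eq_or_ne j i with rfl | hji
    · simp
    · simpa [Pi.single_eq_of_ne hji] using ha j
  conv_lhs => rw [← Finset.univ_sum_single a]
  rw [hs.map_sum _ (fun i _ => Pi.single_nonneg.mpr (ha i)) (by rwa [Finset.univ_sum_single])]
  refine Finset.sum_congr rfl fun i _ => ?_
  rw [hsingle, hs.map_nsmul_single i _ (hsingle i ▸ (hsingle_le i).trans hak),
    ← natCast_zsmul, Int.toNat_of_nonneg (ha i)]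

end IsSimplicialState

theorem isSimplicialState_sum_zsmul [CovariantClass H H (· + ·) (· ≤ ·)] {f : Fin n → H}
    (hf : ∀ i, 0 ≤ f i) (hsum : ∑ i, kv i • f i = u) :
    IsSimplicialState kv u (fun a => ∑ i, a i • f i) := by
  refine ⟨fun a ha hak => ⟨?_, ?_⟩, hsum, fun a b _ _ _ _ _ => ?_⟩
  · exact Finset.sum_nonneg fun i _ => zsmul_nonneg (hf i) (ha i)
  · rw [← hsum, ← sub_nonneg, ← Finset.sum_sub_distrib]
    exact Finset.sum_nonneg fun i _ => by
      rw [← sub_smul]; exact zsmul_nonneg (hf i) (sub_nonneg.mpr (hak i))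
  · simp only [Pi.add_apply, add_smul, Finset.sum_add_distrib]

end

theorem finite_mv_state_extension_general
    {n : ℕ} {H : Type*} [Lattice H] [AddCommGroup H]
    [CovariantClass H H (· + ·) (· ≤ ·)]
    (u : H)
    (k : Fin n → ℕ)
    (f : Fin n → H) (hf : ∀ i, 0 ≤ f i ∧ f i ≤ u) :
    ((∃ s : (Fin n → ℤ) → H,
        IsSimplicialState (fun i => (k i : ℤ)) u s ∧
        ∀ i, s (Pi.single i 1) = f i) ↔ ∑ i, k i • f i = u) ∧
    (∀ s t : (Fin n → ℤ) → H,
       IsSimplicialState (fun i => (k i : ℤ)) u s →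
       IsSimplicialState (fun i => (k i : ℤ)) u t →
       (∀ i, s (Pi.single i 1) = t (Pi.single i 1)) →
       ∀ a : Fin n → ℤ, 0 ≤ a → a ≤ (fun i => (k i : ℤ)) → s a = t a) := by
  have hk0 : (0 : Fin n → ℤ) ≤ fun i => (k i : ℤ) := fun i => Int.natCast_nonneg (k i)
  have hcast : ∑ i, k i • f i = ∑ i, (k i : ℤ) • f i := by simp only [natCast_zsmul]
  refine ⟨⟨?_, fun hsum => ?_⟩, ?_⟩
  · rintro ⟨s, hs, hatoms⟩
    rw [hcast, ← hs.2.1, hs.eq_sum_zsmul_atoms hk0 le_rfl]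
    simp only [hatoms]
  · exact ⟨_, isSimplicialState_sum_zsmul (fun i => (hf i).1) (hcast ▸ hsum),
      sum_single_zsmul f⟩
  · intro s t hs ht hatoms a ha hak
    rw [hs.eq_sum_zsmul_atoms ha hak, ht.eq_sum_zsmul_atoms ha hak]
    simp only [hatoms]

/-- A function defined on the atoms of A = M_{k_1} × ⋯ × M_{k_n}
(identified with the unit interval of (ℤ^n, k), the atoms being the standard
basis vectors) with values in the unit interval of H extends to a state A → N
iff k_1·s(a_1) + ⋯ + k_n·s(a_n) = 1, and the extension is unique. -/
theorem finite_mv_state_extension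
    {n : ℕ} {H : Type*} [Lattice H] [AddCommGroup H]
    [CovariantClass H H (· + ·) (· ≤ ·)]
    (u : H) (hu : 0 ≤ u)
    (k : Fin n → ℕ) (hk : ∀ i, 0 < k i)
    (f : Fin n → H) (hf : ∀ i, 0 ≤ f i ∧ f i ≤ u) :
    ((∃ s : (Fin n → ℤ) → H,
        IsSimplicialState (fun i => (k i : ℤ)) u s ∧
        ∀ i, s (Pi.single i 1) = f i) ↔ ∑ i, k i • f i = u) ∧
    (∀ s t : (Fin n → ℤ) → H,
       IsSimplicialState (fun i => (k i : ℤ)) u s →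
       IsSimplicialState (fun i => (k i : ℤ)) u t →
       (∀ i, s (Pi.single i 1) = t (Pi.single i 1)) →
       ∀ a : Fin n → ℤ, 0 ≤ a → a ≤ (fun i => (k i : ℤ)) → s a = t a) :=
  finite_mv_state_extension_general u k f hf
end
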